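/- Let f, g ∈ Cu(G) and let A be a van Hove sequence such that the Eberlein convolution f ⊛_A g exists. Then f ⊛_A g ∈ Cu(G); more precisely, ‖f ⊛_A g‖_∞ ≤ ‖f‖_∞ · ‖g‖_∞ and for every t ∈ G one has ‖T_t(f ⊛_A g) − (f ⊛_A g)‖_∞ ≤ ‖T_t f − f‖_∞ · ‖g‖_∞; in particular f ⊛_A g is bounded and uniformly continuous. -/

import Mathlib

open MeasureTheory Filter Topology Pointwise ComplexConjugate
open scoped BigOperators

noncomputable section

variable {G : Type*} [AddCommGroup G] [UniformSpace G] [IsUniformAddGroup G]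
  [LocallyCompactSpace G] [SecondCountableTopology G]
  [MeasurableSpace G] [BorelSpace G]

/-- The van Hove `K`-boundary of a set `B`:
`∂^K B = (closure (B+K) \ B) ∪ (((G \ B) - K) ∩ closure B)`. -/
def vhBoundary (K B : Set G) : Set G :=
  (closure (B + K) \ B) ∪ ((Bᶜ - K) ∩ closure B)

/-- `A` is a van Hove sequence for the Haar measure `μ`: a sequence of compact sets of
positive measure such that for every compact `K` the relative measure of the van Hove
boundary tends to `0`. -/
def IsVanHove (μ : Measure G) (A : ℕ → Set G) : Prop :=
  (∀ n, IsCompact (A n)) ∧ (∀ n, 0 < μ (A n)) ∧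
    ∀ K : Set G, IsCompact K →
      Tendsto (fun n => μ (vhBoundary K (A n)) / μ (A n)) atTop (nhds 0)

/-- `f ∈ Cu(G)`: bounded and uniformly continuous. -/
def IsCu (f : G → ℂ) : Prop :=
  UniformContinuous f ∧ ∃ C : ℝ, ∀ x, ‖f x‖ ≤ C

/-- `χ` is a (continuous, unimodular) character of `G`, viewed as a `ℂ`-valued function. -/
def IsChar (χ : G → ℂ) : Prop :=
  Continuous χ ∧ (∀ x, ‖χ x‖ = 1) ∧ ∀ x y, χ (x + y) = χ x * χ y

/-- `f̃(x) = conj (f (-x))`. -/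
def tilde (f : G → ℂ) : G → ℂ := fun x => conj (f (-x))

/-- `(T_t f)(x) = f (x - t)`. -/
def shiftBy (t : G) (f : G → ℂ) : G → ℂ := fun x => f (x - t)

/-- Sup norm `‖f‖_∞`. -/
def supN (f : G → ℂ) : ℝ := ⨆ x, ‖f x‖

/-- The Fourier–Bohr coefficient `c_χ^A(f)` exists and equals `c`. -/
def FBTendsto (μ : Measure G) (A : ℕ → Set G) (χ f : G → ℂ) (c : ℂ) : Prop :=
  Tendsto (fun n => (μ (A n)).toReal⁻¹ • ∫ t in A n, conj (χ t) * f t ∂μ)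
    atTop (nhds c)

/-- The Fourier–Bohr coefficient of `f` at `χ` exists uniformly (w.r.t. `A`) with value `c`:
`lim_n |A_n|⁻¹ ∫_{x+A_n} conj (χ t) f t dθ(t) = c` uniformly in `x ∈ G`. -/
def FBUniform (μ : Measure G) (A : ℕ → Set G) (χ f : G → ℂ) (c : ℂ) : Prop :=
  TendstoUniformly
    (fun n (x : G) => (μ (A n)).toReal⁻¹ • ∫ t in x +ᵥ A n, conj (χ t) * f t ∂μ)
    (fun _ => c) atTop

/-- The Eberlein convolution `f ⊛_A g` exists and equals `F`:
for every `t`, `lim_n |A_n|⁻¹ ∫_{A_n} f s · g (t - s) dθ(s) = F t`. -/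
def EberleinTendsto (μ : Measure G) (A : ℕ → Set G) (f g F : G → ℂ) : Prop :=
  ∀ t : G, Tendsto (fun n => (μ (A n)).toReal⁻¹ • ∫ s in A n, f s * g (t - s) ∂μ)
    atTop (nhds (F t))

/-- The Besicovitch seminorm `‖f‖_{b,p,A}`. -/
def bNorm (μ : Measure G) (A : ℕ → Set G) (p : ℝ) (f : G → ℂ) : ℝ :=
  Filter.limsup
    (fun n => ((μ (A n)).toReal⁻¹ * ∫ t in A n, ‖f t‖ ^ p ∂μ) ^ (1 / p)) atTop

/-- `P` is a trigonometric polynomial: a finite linear combination of characters. -/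
def IsTrigPoly (P : G → ℂ) : Prop :=
  ∃ (k : ℕ) (c : Fin k → ℂ) (χ : Fin k → G → ℂ),
    (∀ j, IsChar (χ j)) ∧ P = fun x => ∑ j, c j * χ j x

/-- `f ∈ Bap^p_A(G)`: `f` can be approximated by trigonometric polynomials in `‖·‖_{b,p,A}`. -/
def BapP (μ : Measure G) (A : ℕ → Set G) (p : ℝ) (f : G → ℂ) : Prop :=
  ∀ ε : ℝ, 0 < ε → ∃ P : G → ℂ, IsTrigPoly P ∧ bNorm μ A p (fun x => f x - P x) < ε

/-- `f` is amenable w.r.t. `A` with mean `c`: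
`lim_n |A_n|⁻¹ ∫_{x+A_n} f dθ = c` uniformly in `x ∈ G`. -/
def Amenable (μ : Measure G) (A : ℕ → Set G) (f : G → ℂ) (c : ℂ) : Prop :=
  TendstoUniformly
    (fun n (x : G) => (μ (A n)).toReal⁻¹ • ∫ t in x +ᵥ A n, f t ∂μ)
    (fun _ => c) atTop

/-! The averages `|A_n|⁻¹ ∫_{A_n} f(s) g(x - s)` are bounded by `‖f‖_∞ ‖g‖_∞`, and the bound
passes to the limit. For the shift, the substitution `s ↦ s + t` turns the average defining
`F (x - t)` into one of `f(s - t) g(x - s)` over `t + A_n`. Replacing `f(s - t)` by `f(s)` costs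
`‖T_t f - f‖_∞ ‖g‖_∞`; replacing `t + A_n` by `A_n` costs
`‖f‖_∞ ‖g‖_∞ |(t + A_n) ∆ A_n| / |A_n|`, which tends to `0` because the symmetric difference
lies in the van Hove boundary `∂^{t,-t} A_n`. Uniform continuity of `F` is then inherited from
that of `f`. -/

open scoped symmDiff

section SupNorm

variable {X : Type*} {f : X → ℂ}

lemma supN_nonneg (f : X → ℂ) : 0 ≤ supN f :=
  Real.iSup_nonneg fun _ => norm_nonneg _

lemma norm_le_supN (hf : ∃ C, ∀ x, ‖f x‖ ≤ C) (x : X) : ‖f x‖ ≤ supN f :=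
  le_ciSup (hf.imp fun _ hC => Set.forall_mem_range.2 hC) x

lemma supN_le {C : ℝ} (hC0 : 0 ≤ C) (hC : ∀ x, ‖f x‖ ≤ C) : supN f ≤ C :=
  Real.iSup_le hC hC0

end SupNorm

section UniformContinuity

variable {H : Type*} [AddCommGroup H] [UniformSpace H] [IsUniformAddGroup H]

lemma UniformContinuous.tendsto_supN_shift_sub {f : H → ℂ} (hf : UniformContinuous f) :
    Tendsto (fun t => supN fun y => f (y - t) - f y) (𝓝 0) (𝓝 0) := by
  refine Metric.tendsto_nhds.2 fun ε hε => ?_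
  have hclose := Metric.uniformity_basis_dist.tendsto_right_iff.1 hf (ε / 2) (half_pos hε)
  rw [uniformity_eq_comap_nhds_zero H, eventually_comap] at hclose
  filter_upwards [hclose] with t ht
  rw [Real.dist_0_eq_abs, abs_of_nonneg (supN_nonneg _)]
  refine (supN_le (half_pos hε).le fun y => ?_).trans_lt (half_lt_self hε)
  rw [← dist_eq_norm]
  exact (ht (y - t, y) (sub_sub_cancel y t)).le

lemma uniformContinuous_of_norm_sub_le {E : Type*} [SeminormedAddCommGroup E] {φ : H → ℝ}
    (hφ : Tendsto φ (𝓝 0) (𝓝 0)) {F : H → E} (hF : ∀ t x, ‖F (x - t) - F x‖ ≤ φ t) :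
    UniformContinuous F := by
  refine Metric.uniformity_basis_dist.tendsto_right_iff.2 fun ε hε => ?_
  rw [uniformity_eq_comap_nhds_zero H, eventually_comap]
  filter_upwards [hφ.eventually (gt_mem_nhds hε)] with t ht p hp
  calc dist (F p.1) (F p.2) = ‖F (p.2 - t) - F p.2‖ := by rw [dist_eq_norm, ← hp, sub_sub_cancel]
    _ ≤ φ t := hF t p.2
    _ < ε := ht

end UniformContinuity

section SetIntegral

variable {X E : Type*} [MeasurableSpace X] {μ : Measure X}
  [NormedAddCommGroup E] [NormedSpace ℝ E]

lemma norm_setAverage_le {s : Set X} {h : X → E} {C : ℝ} (hC0 : 0 ≤ C)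
    (hC : ∀ x ∈ s, ‖h x‖ ≤ C) : ‖⨍ x in s, h x ∂μ‖ ≤ C := by
  rw [setAverage_eq, norm_smul, norm_inv, Real.norm_of_nonneg measureReal_nonneg]
  rcases eq_or_ne (μ.real s) 0 with h0 | h0
  · simpa [h0] using hC0
  have hs : μ s < ⊤ := lt_top_iff_ne_top.2 fun htop => h0 (by simp [Measure.real, htop])
  calc (μ.real s)⁻¹ * ‖∫ x in s, h x ∂μ‖ ≤ (μ.real s)⁻¹ * (C * μ.real s) := by
        gcongr; exact norm_setIntegral_le_of_norm_le_const hs hC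
    _ = C := by field_simp

lemma norm_setIntegral_sub_setIntegral_le {s t : Set X} {h : X → E} {C : ℝ}
    (hs : MeasurableSet s) (ht : MeasurableSet t) (hsfin : μ s ≠ ⊤) (htfin : μ t ≠ ⊤)
    (hhs : IntegrableOn h s μ) (hht : IntegrableOn h t μ) (hC : ∀ x ∈ s ∆ t, ‖h x‖ ≤ C) :
    ‖∫ x in s, h x ∂μ - ∫ x in t, h x ∂μ‖ ≤ C * μ.real (s ∆ t) := by
  have hst : ∫ x in s, h x ∂μ - ∫ x in t, h x ∂μ
      = ∫ x in s \ t, h x ∂μ - ∫ x in t \ s, h x ∂μ := by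
    rw [← integral_inter_add_sdiff ht hhs, ← integral_inter_add_sdiff hs hht, Set.inter_comm]
    abel
  have hfin : ∀ {u v : Set X}, μ u ≠ ⊤ → μ (u \ v) < ⊤ := fun hu =>
    (measure_mono Set.sdiff_subset).trans_lt hu.lt_top
  rw [hst, measureReal_symmDiff_eq hs ht hsfin htfin, mul_add]
  refine (norm_sub_le _ _).trans (add_le_add ?_ ?_)
  · exact norm_setIntegral_le_of_norm_le_const (hfin hsfin) fun x hx => hC x (Or.inl hx)
  · exact norm_setIntegral_le_of_norm_le_const (hfin htfin) fun x hx => hC x (Or.inr hx)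

end SetIntegral

lemma integrableOn_of_continuous_of_norm_le {X : Type*} [TopologicalSpace X]
    [MeasurableSpace X] [OpensMeasurableSpace X] {μ : Measure X} {h : X → ℂ}
    (hc : Continuous h) {C : ℝ} (hC : ∀ x, ‖h x‖ ≤ C) {s : Set X} (hs : μ s ≠ ⊤) :
    IntegrableOn h s μ :=
  Measure.integrableOn_of_bounded hs hc.aestronglyMeasurable (Eventually.of_forall hC)

lemma IsCompact.restrict_closure {X : Type*} [TopologicalSpace X] [R1Space X]
    [MeasurableSpace X] [BorelSpace X] {K : Set X} (hK : IsCompact K) (μ : Measure X)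
    [IsFiniteMeasureOnCompacts μ] : μ.restrict (closure K) = μ.restrict K := by
  rw [← Measure.restrict_toMeasurable hK.measure_lt_top.ne]
  refine Measure.restrict_congr_set (ae_eq_of_subset_of_measure_ge
    (hK.closure_subset_measurableSet (measurableSet_toMeasurable μ K) (subset_toMeasurable μ K))
    ?_ measurableSet_closure.nullMeasurableSet ?_)
  · rw [measure_toMeasurable, hK.measure_closure]
  · rw [measure_toMeasurable]
    exact hK.measure_lt_top.ne

section Shift

variable {H : Type*} [AddCommGroup H] [TopologicalSpace H] [IsTopologicalAddGroup H]
  [MeasurableSpace H] [BorelSpace H] {μ : Measure H} [μ.IsAddLeftInvariant]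

lemma setIntegral_vadd (t : H) (s : Set H) (h : H → ℂ) :
    ∫ u in t +ᵥ s, h u ∂μ = ∫ u in s, h (t + u) ∂μ := by
  simpa [← Set.image_vadd, Set.image_image] using
    (measurePreserving_add_left μ t).setIntegral_image_emb
      (MeasurableEquiv.addLeft t).measurableEmbedding h s

lemma norm_setAverage_mul_sub_shift_le {f g : H → ℂ} (hf : Continuous f) (hg : Continuous g)
    {Cf Cg D : ℝ} (hfC : ∀ y, ‖f y‖ ≤ Cf) (hgC : ∀ y, ‖g y‖ ≤ Cg) {t : H}
    (hD : ∀ y, ‖f (y - t) - f y‖ ≤ D) {B : Set H} (hB : MeasurableSet B) (hB0 : μ B ≠ 0)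
    (hBfin : μ B ≠ ⊤) (x : H) :
    ‖⨍ s in B, f s * g (x - t - s) ∂μ - ⨍ s in B, f s * g (x - s) ∂μ‖
      ≤ D * Cg + Cf * Cg * (μ.real ((t +ᵥ B) ∆ B) / μ.real B) := by
  set S := t +ᵥ B
  have hSB : μ S = μ B := measure_vadd μ t B
  have hSfin : μ S ≠ ⊤ := hSB ▸ hBfin
  have hfg_le : ∀ u, ‖f u * g (x - u)‖ ≤ Cf * Cg := fun u => norm_mul_le_of_le (hfC _) (hgC _)
  have hfg_int : ∀ {s : Set H}, μ s ≠ ⊤ → IntegrableOn (fun u => f u * g (x - u)) s μ :=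
    integrableOn_of_continuous_of_norm_le (by fun_prop) hfg_le
  have hdiff_le : ∀ u, ‖(f (u - t) - f u) * g (x - u)‖ ≤ D * Cg :=
    fun u => norm_mul_le_of_le (hD u) (hgC _)
  have hsplit : ∫ s in B, f s * g (x - t - s) ∂μ - ∫ s in B, f s * g (x - s) ∂μ
      = ∫ u in S, (f (u - t) - f u) * g (x - u) ∂μ
        + (∫ u in S, f u * g (x - u) ∂μ - ∫ u in B, f u * g (x - u) ∂μ) := by
    have htrans : ∫ s in B, f s * g (x - t - s) ∂μ = ∫ u in S, f (u - t) * g (x - u) ∂μ := by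
      simp only [S, setIntegral_vadd, add_sub_cancel_left, sub_sub]
    rw [htrans, ← add_sub_assoc, ← integral_add
      (integrableOn_of_continuous_of_norm_le (by fun_prop) hdiff_le hSfin) (hfg_int hSfin)]
    simp only [sub_mul, sub_add_cancel]
  have hint : ‖∫ s in B, f s * g (x - t - s) ∂μ - ∫ s in B, f s * g (x - s) ∂μ‖
      ≤ D * Cg * μ.real B + Cf * Cg * μ.real (S ∆ B) := by
    rw [hsplit, ← show μ.real S = μ.real B from congrArg ENNReal.toReal hSB]
    exact (norm_add_le _ _).trans (add_le_add
      (norm_setIntegral_le_of_norm_le_const hSfin.lt_top fun u _ => hdiff_le u)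
      (norm_setIntegral_sub_setIntegral_le (hB.const_vadd t) hB hSfin hBfin (hfg_int hSfin)
        (hfg_int hBfin) fun u _ => hfg_le u))
  have hBpos : 0 < μ.real B := ENNReal.toReal_pos hB0 hBfin
  rw [setAverage_eq, setAverage_eq, ← smul_sub, norm_smul, norm_inv,
    Real.norm_of_nonneg hBpos.le]
  calc (μ.real B)⁻¹ * ‖∫ s in B, f s * g (x - t - s) ∂μ - ∫ s in B, f s * g (x - s) ∂μ‖
      ≤ (μ.real B)⁻¹ * (D * Cg * μ.real B + Cf * Cg * μ.real (S ∆ B)) := by gcongr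
    _ = D * Cg + Cf * Cg * (μ.real (S ∆ B) / μ.real B) := by field_simp

end Shift

section VanHove

variable {H : Type*} [AddCommGroup H] [UniformSpace H] [IsUniformAddGroup H]

lemma vadd_closure_symmDiff_subset_vhBoundary (t : H) (A : Set H) :
    (t +ᵥ closure A) ∆ closure A ⊆ vhBoundary {t, -t} A := by
  rintro u (⟨hu, hnot⟩ | ⟨hu, hnot⟩)
  · refine Or.inl ⟨?_, fun hA => hnot (subset_closure hA)⟩
    rw [← closure_vadd] at hu
    refine closure_mono ?_ hu
    rintro _ ⟨a, ha, rfl⟩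
    simpa [add_comm] using Set.add_mem_add ha (Set.mem_insert t _)
  · refine Or.inr ⟨?_, hu⟩
    have hA : u - t ∈ Aᶜ := fun h => hnot ⟨u - t, subset_closure h, by simp⟩
    simpa using Set.sub_mem_sub hA (Set.mem_insert_of_mem t (Set.mem_singleton (-t)))

variable [MeasurableSpace H] [BorelSpace H] {μ : Measure H} {A : ℕ → Set H}

lemma IsVanHove.tendsto_measureReal_vadd_closure_symmDiff (hA : IsVanHove μ A) (t : H) :
    Tendsto (fun n => μ.real ((t +ᵥ closure (A n)) ∆ closure (A n)) / μ.real (closure (A n)))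
      atTop (𝓝 0) := by
  have hK : IsCompact ({t, -t} : Set H) := (Set.toFinite _).isCompact
  have h : Tendsto (fun n => μ ((t +ᵥ closure (A n)) ∆ closure (A n)) / μ (closure (A n)))
      atTop (𝓝 0) := by
    refine tendsto_of_tendsto_of_tendsto_of_le_of_le tendsto_const_nhds (hA.2.2 _ hK)
      (fun _ => bot_le) fun n => ?_
    rw [(hA.1 n).measure_closure]
    exact ENNReal.div_le_div_right (measure_mono (vadd_closure_symmDiff_subset_vhBoundary t _)) _
  simpa [Measure.real, Function.comp_def, ENNReal.toReal_div] using
    (ENNReal.tendsto_toReal ENNReal.zero_ne_top).comp h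

end VanHove

namespace EberleinTendsto

variable {H : Type*} [AddCommGroup H] [MeasurableSpace H] {μ : Measure H} {A : ℕ → Set H}
  {f g F : H → ℂ}

lemma tendsto_setAverage (h : EberleinTendsto μ A f g F) (x : H) :
    Tendsto (fun n => ⨍ s in A n, f s * g (x - s) ∂μ) atTop (𝓝 (F x)) := by
  simpa only [setAverage_eq, measureReal_def] using h x

lemma norm_le (h : EberleinTendsto μ A f g F) (hf : ∃ C, ∀ x, ‖f x‖ ≤ C)
    (hg : ∃ C, ∀ x, ‖g x‖ ≤ C) (x : H) : ‖F x‖ ≤ supN f * supN g :=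
  le_of_tendsto (h.tendsto_setAverage x).norm <| Eventually.of_forall fun _ =>
    norm_setAverage_le (mul_nonneg (supN_nonneg f) (supN_nonneg g)) fun s _ =>
      norm_mul_le_of_le (norm_le_supN hf s) (norm_le_supN hg _)

lemma norm_shift_sub_le [UniformSpace H] [IsUniformAddGroup H] [BorelSpace H]
    [μ.IsAddHaarMeasure] (hA : IsVanHove μ A) (hf : IsCu f) (hg : IsCu g)
    (h : EberleinTendsto μ A f g F) (t x : H) :
    ‖F (x - t) - F x‖ ≤ supN (fun y => f (y - t) - f y) * supN g := by
  obtain ⟨hfu, C, hC⟩ := hf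
  obtain ⟨hgu, hgb⟩ := hg
  set D := supN fun y => f (y - t) - f y
  have hD : ∀ y, ‖f (y - t) - f y‖ ≤ D :=
    norm_le_supN ⟨C + C, fun y => (norm_sub_le _ _).trans (add_le_add (hC _) (hC _))⟩
  have hbound : ∀ n, ‖⨍ s in A n, f s * g (x - t - s) ∂μ - ⨍ s in A n, f s * g (x - s) ∂μ‖
      ≤ D * supN g + supN f * supN g * (μ.real ((t +ᵥ closure (A n)) ∆ closure (A n))
        / μ.real (closure (A n))) := by
    intro n
    -- `A n` need not be measurable, as `H` is not assumed Hausdorff; its closure is.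
    rw [← (hA.1 n).restrict_closure μ]
    exact norm_setAverage_mul_sub_shift_le hfu.continuous hgu.continuous
      (norm_le_supN ⟨C, hC⟩) (norm_le_supN hgb) hD measurableSet_closure
      ((hA.1 n).measure_closure μ ▸ (hA.2.1 n).ne') (hA.1 n).closure.measure_lt_top.ne x
  have hlim := ((hA.tendsto_measureReal_vadd_closure_symmDiff t).const_mul
    (supN f * supN g)).const_add (D * supN g)
  rw [mul_zero, add_zero] at hlim
  exact le_of_tendsto_of_tendsto'
    ((h.tendsto_setAverage (x - t)).sub (h.tendsto_setAverage x)).norm hlim hbound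

end EberleinTendsto

/-- an existing Eberlein convolution of `Cu` functions is again in `Cu(G)`,
with the stated norm bounds. -/
theorem stmt3 (μ : Measure G) [μ.IsAddHaarMeasure] (A : ℕ → Set G)
    (hA : IsVanHove μ A) (f g : G → ℂ) (hf : IsCu f) (hg : IsCu g) (F : G → ℂ)
    (h : EberleinTendsto μ A f g F) :
    IsCu F ∧ supN F ≤ supN f * supN g ∧
      ∀ t : G, supN (fun x => shiftBy t F x - F x) ≤
        supN (fun x => shiftBy t f x - f x) * supN g := by
  have hbound : ∀ x, ‖F x‖ ≤ supN f * supN g := h.norm_le hf.2 hg.2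
  have hshift : ∀ t x, ‖F (x - t) - F x‖ ≤ supN (fun y => f (y - t) - f y) * supN g :=
    h.norm_shift_sub_le hA hf hg
  have hφ : Tendsto (fun t => supN (fun y => f (y - t) - f y) * supN g) (𝓝 0) (𝓝 0) := by
    simpa using hf.1.tendsto_supN_shift_sub.mul_const (supN g)
  exact ⟨⟨uniformContinuous_of_norm_sub_le hφ hshift, _, hbound⟩,
    supN_le (mul_nonneg (supN_nonneg f) (supN_nonneg g)) hbound,
    fun t => supN_le (mul_nonneg (supN_nonneg _) (supN_nonneg g)) (hshift t)⟩
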